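/- arXiv:2010.08694 — 3 statements merged into one kernel-verified Lean document; each statement's English description precedes it below -/
import Mathlib

section
/- Let G' = (V', E') be a d-regular graph with n vertices and m edges (so 2m = n·d), and suppose K ⊆ V' is a clique of size q. In the bipartite gadget graph G (with a biclique A_u × B_u of sizes λ_1 × λ_2 per vertex u, and an extra vertex b_e per edge e connected to one vertex of A_u for each endpoint u of e), the set J consisting of A_u for all u ∈ K, B_u for all u ∉ K, and b_e for all edges e with at least one endpoint outside K, is a vertex cover of G with |J ∩ A| = λ_1·q and |J| = λ_1·q + λ_2·(n − q) + m − q(q−1)/2. -/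
/-- Adjacency of the SVCB gadget graph: for each vertex `u` of the original
graph, a biclique between `A_u := {u} × Fin l1` and `B_u := {u} × Fin l2`;
for each edge `e`, a vertex `b_e` joined, for each endpoint `u` of `e`, to the
single vertex `(u, att e u)` of `A_u`. -/
def gadgetAdj {V : Type*} (l1 l2 : ℕ) (E : Set (Sym2 V)) (att : Sym2 V → V → Fin l1) :
    ((V × Fin l1) ⊕ (V × Fin l2) ⊕ E) → ((V × Fin l1) ⊕ (V × Fin l2) ⊕ E) → Prop
  | .inl (u, _), .inr (.inl (v, _)) => u = v
  | .inr (.inl (v, _)), .inl (u, _) => u = v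
  | .inl (u, i), .inr (.inr e) => u ∈ (e : Sym2 V) ∧ i = att e u
  | .inr (.inr e), .inl (u, i) => u ∈ (e : Sym2 V) ∧ i = att e u
  | _, _ => False

/-!
Every gadget edge meets `J`: an edge of a biclique `A_u × B_u` is covered by `A_u` if `u ∈ K`
and by `B_u` otherwise, and an edge `b_e – A_u` is covered by `A_u` if `u ∈ K` and by `b_e`
otherwise. Counting, `J` consists of `λ₁ q` vertices in the `A`-part, `λ₂ (n - q)` in the
`B`-part, and one `b_e` for every edge not inside the clique `K`, of which there are
`m - q(q-1)/2`.
-/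

theorem Set.ncard_setOf_sumElim {α β : Type*} [Finite α] [Finite β] (p : α → Prop)
    (q : β → Prop) : {w | Sum.elim p q w}.ncard = {a | p a}.ncard + {b | q b}.ncard := by
  simp only [← Nat.card_coe_set_eq]
  exact (Nat.card_congr Equiv.subtypeSum).trans Nat.card_sum

theorem Set.ncard_setOf_fst_mem {α β : Type*} (s : Set α) :
    {p : α × β | p.1 ∈ s}.ncard = s.ncard * Nat.card β := by
  rw [← Set.ncard_univ, ← Set.ncard_prod, Set.prod_univ]
  rfl

namespace SimpleGraph

variable {V : Type*} {G : SimpleGraph V} {s : Finset V}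

theorem IsClique.image_setOf_edge_subset [DecidableEq V] (h : G.IsClique ↑s) :
    Subtype.val '' {e : G.edgeSet | ∀ v ∈ (e : Sym2 V), v ∈ s} =
      ↑(s.offDiag.image Sym2.mk.uncurry) := by
  ext e
  simp only [Set.mem_image, Set.mem_ofPred_eq, Finset.coe_image, Finset.mem_coe,
    Finset.mem_offDiag, Subtype.exists, exists_and_right, exists_eq_right]
  constructor
  · rintro ⟨he, hsub⟩
    induction e with
    | _ a b =>
      exact ⟨(a, b), ⟨hsub a (Sym2.mem_mk_left a b), hsub b (Sym2.mem_mk_right a b),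
        G.ne_of_adj he⟩, rfl⟩
  · rintro ⟨⟨a, b⟩, ⟨ha, hb, hab⟩, rfl⟩
    refine ⟨h ha hb hab, fun v hv => ?_⟩
    rcases Sym2.mem_iff.mp hv with rfl | rfl <;> assumption

theorem IsClique.ncard_setOf_edge_subset (h : G.IsClique ↑s) :
    {e : G.edgeSet | ∀ v ∈ (e : Sym2 V), v ∈ s}.ncard = s.card.choose 2 := by
  classical
  rw [← Set.ncard_image_of_injective _ Subtype.val_injective, h.image_setOf_edge_subset,
    Set.ncard_coe_finset, Sym2.card_image_offDiag]

theorem IsClique.ncard_setOf_edge_not_subset [Finite V] (h : G.IsClique ↑s) :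
    {e : G.edgeSet | ∃ v ∈ (e : Sym2 V), v ∉ s}.ncard = G.edgeSet.ncard - s.card.choose 2 := by
  have hcompl : {e : G.edgeSet | ∀ v ∈ (e : Sym2 V), v ∈ s}ᶜ =
      {e : G.edgeSet | ∃ v ∈ (e : Sym2 V), v ∉ s} := by
    ext; simp
  rw [← hcompl, Set.ncard_compl, h.ncard_setOf_edge_subset, Nat.card_coe_set_eq]

end SimpleGraph

section Gadget

variable {V : Type*}

def gadgetCover (l1 l2 : ℕ) (K : Set V) (E : Set (Sym2 V)) :
    Set ((V × Fin l1) ⊕ (V × Fin l2) ⊕ E) :=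
  {w | Sum.elim (fun p : V × Fin l1 => p.1 ∈ K)
        (Sum.elim (fun p : V × Fin l2 => p.1 ∈ Kᶜ)
          (fun e : E => ∃ v ∈ (e : Sym2 V), v ∉ K)) w}

variable {l1 l2 : ℕ}

theorem gadgetAdj_cover (K : Set V) {E : Set (Sym2 V)} {att : Sym2 V → V → Fin l1}
    {w w' : (V × Fin l1) ⊕ (V × Fin l2) ⊕ E} (h : gadgetAdj l1 l2 E att w w') :
    w ∈ gadgetCover l1 l2 K E ∨ w' ∈ gadgetCover l1 l2 K E := by
  rcases w with ⟨u, i⟩ | ⟨v, j⟩ | e <;> rcases w' with ⟨u', i'⟩ | ⟨v', j'⟩ | e' <;>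
    simp only [gadgetAdj] at h <;>
    simp only [gadgetCover, Set.mem_ofPred_eq, Sum.elim_inl, Sum.elim_inr, Set.mem_compl_iff]
  · subst h; exact em _
  · exact (em (u ∈ K)).imp_right fun hu => ⟨u, h.1, hu⟩
  · subst h; exact (em _).symm
  · exact ((em (u' ∈ K)).imp_right fun hu => ⟨u', h.1, hu⟩).symm

theorem ncard_gadgetCover_inter_inl (K : Set V) (E : Set (Sym2 V)) :
    {w ∈ gadgetCover l1 l2 K E | ∃ u i, w = Sum.inl (u, i)}.ncard = K.ncard * l1 := by
  have h : {w ∈ gadgetCover l1 l2 K E | ∃ u i, w = Sum.inl (u, i)} =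
      Sum.inl '' {p : V × Fin l1 | p.1 ∈ K} := by
    ext (⟨u, i⟩ | w) <;> simp [gadgetCover]
  rw [h, Set.ncard_image_of_injective _ Sum.inl_injective, Set.ncard_setOf_fst_mem, Nat.card_fin]

theorem ncard_gadgetCover [Finite V] (K : Set V) (E : Set (Sym2 V)) :
    (gadgetCover l1 l2 K E).ncard =
      K.ncard * l1 + (Kᶜ.ncard * l2 + {e : E | ∃ v ∈ (e : Sym2 V), v ∉ K}.ncard) := by
  rw [gadgetCover, Set.ncard_setOf_sumElim, Set.ncard_setOf_sumElim, Set.ncard_setOf_fst_mem,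
    Set.ncard_setOf_fst_mem, Nat.card_fin, Nat.card_fin]

end Gadget

theorem stmt_8_general {V : Type*} [Fintype V]
    (G' : SimpleGraph V)
    (n m q l1 l2 : ℕ)
    (hn : Fintype.card V = n) (hm : G'.edgeSet.ncard = m)
    (K : Finset V) (hclique : G'.IsClique ↑K) (hq : K.card = q)
    (att : Sym2 V → V → Fin l1) :
    let J : Set ((V × Fin l1) ⊕ (V × Fin l2) ⊕ G'.edgeSet) :=
      {w | Sum.elim (fun p : V × Fin l1 => p.1 ∈ K)
            (Sum.elim (fun p : V × Fin l2 => p.1 ∉ K)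
              (fun e : G'.edgeSet => ∃ v, v ∈ (e : Sym2 V) ∧ v ∉ K)) w}
    (∀ w w', gadgetAdj l1 l2 G'.edgeSet att w w' → w ∈ J ∨ w' ∈ J) ∧
    {w ∈ J | ∃ u i, w = Sum.inl (u, i)}.ncard = l1 * q ∧
    J.ncard = l1 * q + l2 * (n - q) + (m - q * (q - 1) / 2) := by
  have hK : (K : Set V).ncard = q := by rw [Set.ncard_coe_finset, hq]
  have hKc : (K : Set V)ᶜ.ncard = n - q := by
    rw [Set.ncard_compl, Nat.card_eq_fintype_card, hn, hK]
  have hedges :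
      {e : G'.edgeSet | ∃ v ∈ (e : Sym2 V), v ∉ (K : Set V)}.ncard = m - q * (q - 1) / 2 :=
    hclique.ncard_setOf_edge_not_subset.trans (by rw [hm, hq, Nat.choose_two_right])
  refine ⟨fun _ _ => gadgetAdj_cover (K : Set V), ?_, ?_⟩
  · exact (ncard_gadgetCover_inter_inl (K : Set V) _).trans (by rw [hK, mul_comm])
  · exact (ncard_gadgetCover (K : Set V) _).trans (by rw [hK, hKc, hedges]; ring)

theorem stmt_8 {V : Type*} [Fintype V] [DecidableEq V]
    (G' : SimpleGraph V) [DecidableRel G'.Adj]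
    (d n m q l1 l2 : ℕ)
    (hn : Fintype.card V = n) (hm : G'.edgeSet.ncard = m)
    (hreg : G'.IsRegularOfDegree d) (hnd : 2 * m = n * d)
    (K : Finset V) (hclique : G'.IsClique ↑K) (hq : K.card = q)
    (att : Sym2 V → V → Fin l1) :
    let J : Set ((V × Fin l1) ⊕ (V × Fin l2) ⊕ G'.edgeSet) :=
      {w | Sum.elim (fun p : V × Fin l1 => p.1 ∈ K)
            (Sum.elim (fun p : V × Fin l2 => p.1 ∉ K)
              (fun e : G'.edgeSet => ∃ v, v ∈ (e : Sym2 V) ∧ v ∉ K)) w}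
    (∀ w w', gadgetAdj l1 l2 G'.edgeSet att w w' → w ∈ J ∨ w' ∈ J) ∧
    {w ∈ J | ∃ u i, w = Sum.inl (u, i)}.ncard = l1 * q ∧
    J.ncard = l1 * q + l2 * (n - q) + (m - q * (q - 1) / 2) :=
  stmt_8_general G' n m q l1 l2 hn hm K hclique hq att
end

section
/- Let G = (A ∪ B, E) be a bipartite graph built from an instance (U, S) of k-Minimum Coverage by taking a vertex b_u ∈ B for each element u ∈ U, a vertex a_S ∈ A for each set S ∈ S, and an edge (a_S, b_u) whenever u ∈ S. Then there exist k subsets in S whose union has size at most c if and only if one can remove at most c vertices from B so that at least k vertices of A are removed, where a vertex of A is removed when all of its incident edges (equivalently, all of its neighbors in B) are removed. -/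
theorem stmt_9 {α : Type*} [DecidableEq α]
    (U : Finset α) (S : Finset (Finset α)) (hS : ∀ T ∈ S, T ⊆ U) (k c : ℕ) :
    (∃ C ⊆ S, C.card = k ∧ (C.sup id).card ≤ c) ↔
      (∃ R ⊆ U, R.card ≤ c ∧ k ≤ (S.filter (fun T => T ⊆ R)).card) := by
  constructor
  · rintro ⟨C, hCS, hCk, hCc⟩
    refine ⟨C.sup id, ?_, hCc, ?_⟩
    · exact Finset.sup_le fun T hT => hS T (hCS hT)
    · rw [← hCk]
      exact Finset.card_le_card fun T hT =>
        Finset.mem_filter.2 ⟨hCS hT, Finset.le_sup (f := id) hT⟩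
  · rintro ⟨R, hRU, hRc, hk⟩
    obtain ⟨C, hC, hCk⟩ := Finset.exists_subset_card_eq hk
    refine ⟨C, hC.trans (Finset.filter_subset _ _), hCk, ?_⟩
    calc (C.sup id).card ≤ R.card := Finset.card_le_card
          (Finset.sup_le fun T hT => (Finset.mem_filter.1 (hC hT)).2)
      _ ≤ c := hRc
end

section
/- Let m_1, …, m_s and k be natural numbers with k ≤ ∏ m_i, and for each i let c_i : {0,…,m_i} → ℕ be monotone non-decreasing with c_i(0) = 0 (the minimum deletion cost to remove k_i outputs from factor i). Then min { ∑ c_i(k_i) : 0 ≤ k_i ≤ m_i, ∏ m_i − ∏(m_i − k_i) ≥ k } equals the value computed by the two-factor dynamic program that, processing factors left to right, maintains OPT[i][j] = min over pairs (k_1, k_2) with k_1·m_i' + k_2·M_{i−1} − k_1·k_2 ≥ j of OPT[i−1][k_1] + c_i(k_2), where M_{i−1} = ∏_{ℓ<i} m_ℓ and m_i' = m_i. (Here OPT[1][j] = c_1(j).) -/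
open Finset

private noncomputable def Gv (m : ℕ → ℕ) (c : ℕ → ℕ → ℕ) (s j : ℕ) : ℕ :=
  sInf {v : ℕ | ∃ kk : ℕ → ℕ, (∀ i, kk i ≤ m i) ∧
    j ≤ (∏ i ∈ Finset.Icc 1 s, m i) - ∏ i ∈ Finset.Icc 1 s, (m i - kk i) ∧
    v = ∑ i ∈ Finset.Icc 1 s, c i (kk i)}

private theorem arith1 (M B Q k2 : ℕ) (hQM : Q ≤ M) (hk2 : k2 ≤ B) :
    M * B - Q * (B - k2) = (M - Q) * B + k2 * M - (M - Q) * k2 := by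
  have h6 : Q * (B - k2) ≤ M * B := Nat.mul_le_mul hQM (Nat.sub_le _ _)
  have h5 : (M - Q) * k2 ≤ (M - Q) * B + k2 * M :=
    le_trans (Nat.mul_le_mul_left _ hk2) (Nat.le_add_right _ _)
  zify [hQM, hk2, h6, h5]
  ring

private theorem arith2 (M B k1 k2 : ℕ) (h1 : k1 ≤ M) (h2 : k2 ≤ B) :
    k1 * B + k2 * M - k1 * k2 = M * B - (M - k1) * (B - k2) := by
  have h5 : k1 * k2 ≤ k1 * B + k2 * M :=
    le_trans (Nat.mul_le_mul_left _ h2) (Nat.le_add_right _ _)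
  have h6 : (M - k1) * (B - k2) ≤ M * B :=
    Nat.mul_le_mul (Nat.sub_le _ _) (Nat.sub_le _ _)
  zify [h1, h2, h5, h6]
  ring

private theorem optMono (s : ℕ) (m : ℕ → ℕ) (c : ℕ → ℕ → ℕ)
    (hmono : ∀ i, Monotone (c i))
    (hm : ∀ l ∈ Finset.Icc 1 s, 1 ≤ m l)
    (OPT : ℕ → ℕ → ℕ)
    (hbase : ∀ j, OPT 1 j = c 1 j)
    (hstep : ∀ i, 2 ≤ i → i ≤ s → ∀ j,
      OPT i j = sInf {v : ℕ | ∃ k1 k2 : ℕ,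
        j ≤ k1 * m i + k2 * (∏ l ∈ Finset.Icc 1 (i - 1), m l) - k1 * k2 ∧
        v = OPT (i - 1) k1 + c i k2}) :
    ∀ i, 1 ≤ i → i ≤ s → Monotone (OPT i) := by
  intro i h1 h2
  rcases Nat.lt_or_ge i 2 with h | h
  · have : i = 1 := by omega
    subst this
    intro a b hab
    simp only [hbase]
    exact hmono 1 hab
  · intro a b hab
    rw [hstep i h h2 a, hstep i h h2 b]
    have hmi : 1 ≤ m i := hm i (Finset.mem_Icc.mpr ⟨h1, h2⟩)
    have hne : {v : ℕ | ∃ k1 k2 : ℕ,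
        b ≤ k1 * m i + k2 * (∏ l ∈ Finset.Icc 1 (i - 1), m l) - k1 * k2 ∧
        v = OPT (i - 1) k1 + c i k2}.Nonempty := by
      refine ⟨OPT (i - 1) b + c i 0, b, 0, ?_, rfl⟩
      simpa using Nat.le_mul_of_pos_right b hmi
    obtain ⟨k1, k2, hc, hv⟩ := Nat.sInf_mem hne
    exact Nat.sInf_le ⟨k1, k2, hab.trans hc, hv⟩

private theorem key (s : ℕ) (m : ℕ → ℕ) (c : ℕ → ℕ → ℕ)
    (hmono : ∀ i, Monotone (c i)) (hzero : ∀ i, c i 0 = 0)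
    (hm : ∀ l ∈ Finset.Icc 1 s, 1 ≤ m l)
    (OPT : ℕ → ℕ → ℕ)
    (hbase : ∀ j, OPT 1 j = c 1 j)
    (hstep : ∀ i, 2 ≤ i → i ≤ s → ∀ j,
      OPT i j = sInf {v : ℕ | ∃ k1 k2 : ℕ,
        j ≤ k1 * m i + k2 * (∏ l ∈ Finset.Icc 1 (i - 1), m l) - k1 * k2 ∧
        v = OPT (i - 1) k1 + c i k2}) :
    ∀ i, 1 ≤ i → i ≤ s → ∀ j, j ≤ ∏ l ∈ Finset.Icc 1 i, m l →
      OPT i j = Gv m c i j := by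
  intro i h1
  induction i, h1 using Nat.le_induction with
  | base =>
    intro hs j hj
    have hj1 : j ≤ m 1 := by simpa using hj
    rw [hbase]
    unfold Gv
    have hwit : c 1 j ∈ {v : ℕ | ∃ kk : ℕ → ℕ, (∀ l, kk l ≤ m l) ∧
        j ≤ (∏ l ∈ Finset.Icc 1 1, m l) - ∏ l ∈ Finset.Icc 1 1, (m l - kk l) ∧
        v = ∑ l ∈ Finset.Icc 1 1, c l (kk l)} := by
      refine ⟨fun l => if l = 1 then j else 0, ?_, ?_, ?_⟩
      · intro l
        by_cases hl : l = 1 <;> simp [hl, hj1]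
      · simp [Nat.sub_sub_self hj1]
      · simp
    refine le_antisymm ?_ (Nat.sInf_le hwit)
    obtain ⟨kk, hkk, hcon, hsum⟩ := Nat.sInf_mem ⟨_, hwit⟩
    rw [hsum]
    simp only [Finset.Icc_self, Finset.prod_singleton] at hcon
    simp only [Finset.Icc_self, Finset.sum_singleton]
    have hj2 : j ≤ kk 1 := by clear hkk hsum; omega
    exact hmono 1 hj2
  | succ i hi ih =>
    intro hs j hj
    have hi1s : i ≤ s := le_trans (Nat.le_succ i) hs
    have hPsucc : ∏ l ∈ Finset.Icc 1 (i+1), m l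
        = (∏ l ∈ Finset.Icc 1 i, m l) * m (i+1) :=
      Finset.prod_Icc_succ_top (Nat.le_add_left 1 i) m
    have hmi : 1 ≤ m (i+1) := hm (i+1) (Finset.mem_Icc.mpr ⟨by omega, hs⟩)
    have hOPT := hstep (i+1) (by omega) hs j
    simp only [Nat.add_sub_cancel] at hOPT
    rw [hOPT]
    unfold Gv
    have hGne : {v : ℕ | ∃ kk : ℕ → ℕ, (∀ l, kk l ≤ m l) ∧
        j ≤ (∏ l ∈ Finset.Icc 1 (i+1), m l) - ∏ l ∈ Finset.Icc 1 (i+1), (m l - kk l) ∧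
        v = ∑ l ∈ Finset.Icc 1 (i+1), c l (kk l)}.Nonempty := by
      refine ⟨∑ l ∈ Finset.Icc 1 (i+1), c l (m l), m, fun l => le_rfl, ?_, rfl⟩
      have h0 : ∏ l ∈ Finset.Icc 1 (i+1), (m l - m l) = 0 :=
        Finset.prod_eq_zero (Finset.mem_Icc.mpr ⟨le_rfl, by omega⟩) (by simp)
      rw [h0, Nat.sub_zero]
      exact hj
    have hGine : ∀ j', j' ≤ ∏ l ∈ Finset.Icc 1 i, m l →
        {v : ℕ | ∃ kk : ℕ → ℕ, (∀ l, kk l ≤ m l) ∧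
        j' ≤ (∏ l ∈ Finset.Icc 1 i, m l) - ∏ l ∈ Finset.Icc 1 i, (m l - kk l) ∧
        v = ∑ l ∈ Finset.Icc 1 i, c l (kk l)}.Nonempty := by
      intro j' hj'
      refine ⟨∑ l ∈ Finset.Icc 1 i, c l (m l), m, fun l => le_rfl, ?_, rfl⟩
      have h0 : ∏ l ∈ Finset.Icc 1 i, (m l - m l) = 0 :=
        Finset.prod_eq_zero (Finset.mem_Icc.mpr ⟨le_rfl, by omega⟩) (by simp)
      rw [h0, Nat.sub_zero]
      exact hj'
    apply le_antisymm
    · -- sInf S ≤ Gv (i+1) j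
      obtain ⟨kk, hkk, hcon, hsum⟩ := Nat.sInf_mem hGne
      have hQM : (∏ l ∈ Finset.Icc 1 i, (m l - kk l)) ≤ ∏ l ∈ Finset.Icc 1 i, m l :=
        Finset.prod_le_prod (fun l _ => Nat.zero_le _) (fun l _ => Nat.sub_le _ _)
      have hprodsplit : ∏ l ∈ Finset.Icc 1 (i+1), (m l - kk l)
          = (∏ l ∈ Finset.Icc 1 i, (m l - kk l)) * (m (i+1) - kk (i+1)) :=
        Finset.prod_Icc_succ_top (Nat.le_add_left 1 i) fun l => m l - kk l
      have hcon' : j ≤ (∏ l ∈ Finset.Icc 1 i, m l) * m (i+1)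
          - (∏ l ∈ Finset.Icc 1 i, (m l - kk l)) * (m (i+1) - kk (i+1)) := by
        rw [hPsucc, hprodsplit] at hcon
        exact hcon
      have harith := arith1 (∏ l ∈ Finset.Icc 1 i, m l) (m (i+1))
        (∏ l ∈ Finset.Icc 1 i, (m l - kk l)) (kk (i+1)) hQM (hkk (i+1))
      have hmem : OPT i ((∏ l ∈ Finset.Icc 1 i, m l) - ∏ l ∈ Finset.Icc 1 i, (m l - kk l))
          + c (i+1) (kk (i+1)) ∈ {v : ℕ | ∃ k1 k2 : ℕ,
          j ≤ k1 * m (i+1) + k2 * (∏ l ∈ Finset.Icc 1 i, m l) - k1 * k2 ∧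
          v = OPT i k1 + c (i+1) k2} :=
        ⟨_, _, hcon'.trans (le_of_eq harith), rfl⟩
      refine le_trans (Nat.sInf_le hmem) ?_
      rw [hsum, Finset.sum_Icc_succ_top (Nat.le_add_left 1 i) fun l => c l (kk l)]
      refine Nat.add_le_add_right ?_ _
      rw [ih hi1s _ (Nat.sub_le _ _)]
      exact Nat.sInf_le ⟨kk, hkk, le_rfl, rfl⟩
    · -- Gv (i+1) j ≤ sInf S
      have hSne : {v : ℕ | ∃ k1 k2 : ℕ,
          j ≤ k1 * m (i+1) + k2 * (∏ l ∈ Finset.Icc 1 i, m l) - k1 * k2 ∧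
          v = OPT i k1 + c (i+1) k2}.Nonempty := by
        refine ⟨OPT i j + c (i+1) 0, j, 0, ?_, rfl⟩
        simpa using Nat.le_mul_of_pos_right j hmi
      obtain ⟨k1, k2, hcon, hval⟩ := Nat.sInf_mem hSne
      rw [hval]
      have hcon2 : j ≤ (∏ l ∈ Finset.Icc 1 i, m l) * m (i+1)
          - ((∏ l ∈ Finset.Icc 1 i, m l) - min k1 (∏ l ∈ Finset.Icc 1 i, m l))
            * (m (i+1) - min k2 (m (i+1))) := by
        have e1 : (∏ l ∈ Finset.Icc 1 i, m l) - min k1 (∏ l ∈ Finset.Icc 1 i, m l)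
            = (∏ l ∈ Finset.Icc 1 i, m l) - k1 := by omega
        have e2 : m (i+1) - min k2 (m (i+1)) = m (i+1) - k2 := by omega
        rw [e1, e2]
        by_cases hc1 : k1 ≤ (∏ l ∈ Finset.Icc 1 i, m l) ∧ k2 ≤ m (i+1)
        · rw [← arith2 _ _ _ _ hc1.1 hc1.2]
          exact hcon
        · have h0 : ((∏ l ∈ Finset.Icc 1 i, m l) - k1) * (m (i+1) - k2) = 0 := by
            rcases not_and_or.mp hc1 with h | h
            · have h0' : (∏ l ∈ Finset.Icc 1 i, m l) - k1 = 0 :=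
                Nat.sub_eq_zero_of_le (by omega)
              rw [h0', Nat.zero_mul]
            · have h0' : m (i+1) - k2 = 0 := Nat.sub_eq_zero_of_le (by omega)
              rw [h0', Nat.mul_zero]
          rw [h0, Nat.sub_zero, ← hPsucc]
          exact hj
      obtain ⟨kk', hkk', hcon'', hsum'⟩ :=
        Nat.sInf_mem (hGine (min k1 (∏ l ∈ Finset.Icc 1 i, m l)) (min_le_right _ _))
      have hQ'M : (∏ l ∈ Finset.Icc 1 i, (m l - kk' l)) ≤ ∏ l ∈ Finset.Icc 1 i, m l :=
        Finset.prod_le_prod (fun l _ => Nat.zero_le _) (fun l _ => Nat.sub_le _ _)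
      have hQ'le : (∏ l ∈ Finset.Icc 1 i, (m l - kk' l))
          ≤ (∏ l ∈ Finset.Icc 1 i, m l) - min k1 (∏ l ∈ Finset.Icc 1 i, m l) := by
        clear hkk' hsum'; omega
      classical
      have hmem2 : (∑ l ∈ Finset.Icc 1 i, c l (kk' l)) + c (i+1) (min k2 (m (i+1))) ∈
          {v : ℕ | ∃ kk : ℕ → ℕ, (∀ l, kk l ≤ m l) ∧
            j ≤ (∏ l ∈ Finset.Icc 1 (i+1), m l) - ∏ l ∈ Finset.Icc 1 (i+1), (m l - kk l) ∧
            v = ∑ l ∈ Finset.Icc 1 (i+1), c l (kk l)} := by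
        refine ⟨fun l => if l = i + 1 then min k2 (m (i+1)) else kk' l, ?_, ?_, ?_⟩
        · intro l
          by_cases hl : l = i + 1
          · subst hl; simp
          · simp only [if_neg hl]
            exact hkk' l
        · have hsplit : ∏ l ∈ Finset.Icc 1 (i+1),
              (m l - if l = i + 1 then min k2 (m (i+1)) else kk' l)
              = (∏ l ∈ Finset.Icc 1 i,
                  (m l - if l = i + 1 then min k2 (m (i+1)) else kk' l))
                * (m (i+1) - if i + 1 = i + 1 then min k2 (m (i+1)) else kk' (i+1)) :=
            Finset.prod_Icc_succ_top (Nat.le_add_left 1 i) _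
          have hc2 : (∏ l ∈ Finset.Icc 1 i,
              (m l - if l = i + 1 then min k2 (m (i+1)) else kk' l))
              = ∏ l ∈ Finset.Icc 1 i, (m l - kk' l) := by
            refine Finset.prod_congr rfl fun l hl => ?_
            have : l ≠ i + 1 :=
              Nat.ne_of_lt (Nat.lt_succ_of_le (Finset.mem_Icc.mp hl).2)
            rw [if_neg this]
          rw [hsplit, hc2, if_pos rfl, hPsucc]
          refine hcon2.trans (Nat.sub_le_sub_left ?_ _)
          exact Nat.mul_le_mul_right _ hQ'le
        · have hsplit : ∑ l ∈ Finset.Icc 1 (i+1),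
              c l (if l = i + 1 then min k2 (m (i+1)) else kk' l)
              = (∑ l ∈ Finset.Icc 1 i,
                  c l (if l = i + 1 then min k2 (m (i+1)) else kk' l))
                + c (i+1) (if i + 1 = i + 1 then min k2 (m (i+1)) else kk' (i+1)) :=
            Finset.sum_Icc_succ_top (Nat.le_add_left 1 i) _
          have hc2 : (∑ l ∈ Finset.Icc 1 i,
              c l (if l = i + 1 then min k2 (m (i+1)) else kk' l))
              = ∑ l ∈ Finset.Icc 1 i, c l (kk' l) := by
            refine Finset.sum_congr rfl fun l hl => ?_
            have : l ≠ i + 1 :=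
              Nat.ne_of_lt (Nat.lt_succ_of_le (Finset.mem_Icc.mp hl).2)
            rw [if_neg this]
          rw [hsplit, hc2, if_pos rfl]
      refine le_trans (Nat.sInf_le hmem2) ?_
      have h1 : (∑ l ∈ Finset.Icc 1 i, c l (kk' l))
          = OPT i (min k1 (∏ l ∈ Finset.Icc 1 i, m l)) :=
        ((ih hi1s _ (min_le_right _ _)).trans hsum').symm
      rw [h1]
      have hOPTmono := optMono s m c hmono hm OPT hbase hstep i hi hi1s
      exact Nat.add_le_add (hOPTmono (min_le_left _ _)) (hmono (i+1) (min_le_left _ _))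

theorem stmt_14 (s k : ℕ) (hs : 1 ≤ s) (m : ℕ → ℕ) (c : ℕ → ℕ → ℕ)
    (hk : k ≤ ∏ i ∈ Finset.Icc 1 s, m i)
    (hmono : ∀ i, Monotone (c i)) (hzero : ∀ i, c i 0 = 0)
    (OPT : ℕ → ℕ → ℕ)
    (hbase : ∀ j, OPT 1 j = c 1 j)
    (hstep : ∀ i, 2 ≤ i → i ≤ s → ∀ j,
      OPT i j = sInf {v : ℕ | ∃ k1 k2 : ℕ,
        j ≤ k1 * m i + k2 * (∏ l ∈ Finset.Icc 1 (i - 1), m l) - k1 * k2 ∧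
        v = OPT (i - 1) k1 + c i k2}) :
    OPT s k = sInf {v : ℕ | ∃ kk : ℕ → ℕ,
      (∀ i, kk i ≤ m i) ∧
      k ≤ (∏ i ∈ Finset.Icc 1 s, m i) - ∏ i ∈ Finset.Icc 1 s, (m i - kk i) ∧
      v = ∑ i ∈ Finset.Icc 1 s, c i (kk i)} := by
  by_cases hm : ∀ l ∈ Finset.Icc 1 s, 1 ≤ m l
  · exact key s m c hmono hzero hm OPT hbase hstep s hs le_rfl k hk
  · push_neg at hm
    obtain ⟨l0, hl0, hml0⟩ := hm
    have hP0 : ∏ i ∈ Finset.Icc 1 s, m i = 0 := Finset.prod_eq_zero hl0 (by omega)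
    rw [hP0] at hk
    have hk0 : k = 0 := by omega
    subst hk0
    have hOPT0 : ∀ i, 1 ≤ i → i ≤ s → OPT i 0 = 0 := by
      intro i h1
      induction i, h1 using Nat.le_induction with
      | base => intro _; rw [hbase]; exact hzero 1
      | succ i hi ih =>
        intro hs'
        have h' := hstep (i+1) (by omega) hs' 0
        simp only [Nat.add_sub_cancel] at h'
        rw [h']
        have hmem : (0:ℕ) ∈ {v : ℕ | ∃ k1 k2 : ℕ,
            0 ≤ k1 * m (i+1) + k2 * (∏ l ∈ Finset.Icc 1 i, m l) - k1 * k2 ∧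
            v = OPT i k1 + c (i+1) k2} :=
          ⟨0, 0, Nat.zero_le _, by simp [ih (le_trans (Nat.le_succ i) hs'), hzero]⟩
        exact le_antisymm (Nat.sInf_le hmem) (Nat.zero_le _)
    rw [hOPT0 s hs le_rfl]
    refine (le_antisymm (Nat.sInf_le ?_) (Nat.zero_le _)).symm
    exact ⟨fun _ => 0, fun l => Nat.zero_le _, Nat.zero_le _, by simp [hzero]⟩
end
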